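/- arXiv:1009.2126 — 5 statements merged into one kernel-verified Lean document; each statement's English description precedes it below -/
import Mathlib

section
/- Let A be a commutative Noetherian ring and M a finitely generated A-module. Suppose f : M → M is an A-linear endomorphism such that for every prime ideal p of A, the localization satisfies f(M)_p ⊆ p·M_p. Then f is nilpotent, i.e., there exists n ≥ 1 with f^n = 0. -/
/-!
Let `X` act on `M` by `f`, making `M` a finite `A[X]`-module. Since its support is the zero locus
of its annihilator `ker (aeval f)`, it suffices that `X` lies in every prime `q` of the support.
With `p = q ∩ A`, the hypothesis at `p` and finite generation of `f(M)` give one `s ∉ p` with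
`s • f(M) ⊆ p • M`, that is `(s X) • M ⊆ (p A[X]) • M`. By Nakayama `q` stays in the support of
`M ⧸ (p A[X]) • M`, which `s X` annihilates, so `s X ∈ q` and hence `X ∈ q`.
-/

open Polynomial

theorem Submodule.exists_smul_mem_of_mem_localized' {R M N : Type*} (S : Type*) [CommSemiring R]
    [CommSemiring S] [AddCommMonoid M] [AddCommMonoid N] [Module R M] [Module R N] [Algebra R S]
    [Module S N] [IsScalarTower R S N] (p : Submonoid R) [IsLocalization p S] (f : M →ₗ[R] N)
    [IsLocalizedModule p f] {Q : Submodule R M} {x : M} (hx : f x ∈ Q.localized' S p f) :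
    ∃ s ∈ p, s • x ∈ Q := by
  obtain ⟨m, hm, s, hs⟩ := hx
  rw [IsLocalizedModule.mk'_eq_iff, Submonoid.smul_def, ← map_smul] at hs
  obtain ⟨c, hc⟩ := IsLocalizedModule.exists_of_eq (S := p) hs
  refine ⟨c * s, mul_mem c.2 s.2, ?_⟩
  rw [mul_smul, ← Submonoid.smul_def, ← hc]
  exact Q.smul_of_tower_mem c hm

theorem Submodule.FG.exists_smul_mem_of_forall_exists {R M : Type*} [CommSemiring R]
    [AddCommMonoid M] [Module R M] {S : Submonoid R} {P Q : Submodule R M} (hP : P.FG)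
    (h : ∀ x ∈ P, ∃ s ∈ S, s • x ∈ Q) : ∃ s ∈ S, ∀ x ∈ P, s • x ∈ Q := by
  classical
  obtain ⟨F, rfl⟩ := hP
  choose t htS htQ using fun x : F => h x (subset_span x.2)
  refine ⟨∏ x ∈ F.attach, t x, prod_mem fun x _ => htS x, ?_⟩
  suffices hs : ∏ x ∈ F.attach, t x ∈ Q.colon (F : Set M) by
    rwa [← colon_span, mem_colon] at hs
  refine mem_colon.mpr fun x hx => ?_
  obtain ⟨k, hk⟩ := Finset.dvd_prod_of_mem t (Finset.mem_attach _ ⟨x, hx⟩)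
  rw [hk, mul_comm, mul_smul]
  exact Q.smul_mem k (htQ _)

theorem Module.mem_of_forall_smul_mem_smul_top {R N : Type*} [CommRing R] [AddCommGroup N]
    [Module R N] [Module.Finite R N] {I : Ideal R} {r : R}
    (hr : ∀ y : N, r • y ∈ I • (⊤ : Submodule R N)) {q : PrimeSpectrum R}
    (hq : q ∈ Module.support R N) (hI : I ≤ q.asIdeal) : r ∈ q.asIdeal := by
  have hq' : q ∈ Module.support R (N ⧸ I • (⊤ : Submodule R N)) := by
    rw [Module.support_quotient]
    exact ⟨hq, hI⟩
  refine Module.mem_support_iff_of_finite.mp hq' ?_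
  rw [Submodule.annihilator_quotient, Submodule.mem_colon]
  exact fun y _ => hr y

theorem Module.mem_radical_annihilator_of_forall_mem_support {R N : Type*} [CommRing R]
    [AddCommGroup N] [Module R N] [Module.Finite R N] {r : R}
    (h : ∀ q ∈ Module.support R N, r ∈ q.asIdeal) : r ∈ (Module.annihilator R N).radical := by
  rw [← PrimeSpectrum.vanishingIdeal_zeroLocus_eq_radical, ← Module.support_eq_zeroLocus]
  exact (PrimeSpectrum.mem_vanishingIdeal _ _).2 h

theorem Module.AEval'.C_mul_X_smul_mem_map_smul_top {A M : Type*} [CommRing A] [AddCommGroup M]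
    [Module A M] (f : M →ₗ[A] M) {I : Ideal A} {s : A}
    (hs : ∀ m, s • f m ∈ I • (⊤ : Submodule A M))
    (y : Module.AEval' f) : (C s * X) • y ∈ I.map C • (⊤ : Submodule A[X] (Module.AEval' f)) := by
  obtain ⟨m, rfl⟩ := (Module.AEval'.of f).surjective y
  rw [mul_smul, Module.AEval'.X_smul_of, Module.AEval.C_smul, ← map_smul, ← algebraMap_eq,
    ← Submodule.restrictScalars_mem A, Ideal.smul_restrictScalars, Submodule.restrictScalars_top]
  exact Submodule.smul_top_le_comap_smul_top I (Module.AEval'.of f).toLinearMap (hs m)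

theorem nilpotent_of_image_in_prime_localizations_general
    (A : Type*) [CommRing A]
    (M : Type*) [AddCommGroup M] [Module A M] [Module.Finite A M]
    (f : M →ₗ[A] M)
    (h : ∀ (p : Ideal A) [p.IsPrime],
      ∀ x ∈ LinearMap.range f,
        (LocalizedModule.mkLinearMap p.primeCompl M) x ∈
          (p.map (algebraMap A (Localization p.primeCompl))) •
            (⊤ : Submodule (Localization p.primeCompl)
              (LocalizedModule p.primeCompl M))) :
    ∃ n : ℕ, 1 ≤ n ∧ f ^ n = 0 := by
  have hX : ∀ q ∈ Module.support A[X] (Module.AEval' f), X ∈ q.asIdeal := by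
    intro q hq
    let p := q.asIdeal.comap C
    obtain ⟨s, hsp, hs⟩ : ∃ s ∈ p.primeCompl,
        ∀ x ∈ LinearMap.range f, s • x ∈ p • (⊤ : Submodule A M) := by
      refine (Submodule.fg_range f).exists_smul_mem_of_forall_exists fun x hx => ?_
      refine Submodule.exists_smul_mem_of_mem_localized' (Localization p.primeCompl) _
        (LocalizedModule.mkLinearMap p.primeCompl M) ?_
      rw [Submodule.localized'_smul, Submodule.localized'_top, Ideal.localized'_eq_map]
      exact h p x hx
    have hsX : C s * X ∈ q.asIdeal :=
      Module.mem_of_forall_smul_mem_smul_top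
        (Module.AEval'.C_mul_X_smul_mem_map_smul_top f fun m => hs _ ⟨m, rfl⟩) hq
        Ideal.map_comap_le
    exact (q.isPrime.mem_or_mem hsX).resolve_left hsp
  obtain ⟨n, hn⟩ :=
    Ideal.mem_radical_iff.mp (Module.mem_radical_annihilator_of_forall_mem_support hX)
  rw [Module.AEval.annihilator_eq_ker_aeval, RingHom.mem_ker, map_pow, aeval_X] at hn
  exact ⟨n + 1, Nat.le_add_left 1 n, by rw [pow_succ, hn, zero_mul]⟩

/-- If `A` is a commutative Noetherian ring, `M` a finitely generated `A`-module, and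
`f : M → M` an `A`-linear endomorphism such that for every prime ideal `p` of `A` the
image of `f(M)` in the localization `M_p` lies in `p · M_p`, then `f` is nilpotent. -/
theorem nilpotent_of_image_in_prime_localizations
    (A : Type*) [CommRing A] [IsNoetherianRing A]
    (M : Type*) [AddCommGroup M] [Module A M] [Module.Finite A M]
    (f : M →ₗ[A] M)
    (h : ∀ (p : Ideal A) [p.IsPrime],
      ∀ x ∈ LinearMap.range f,
        (LocalizedModule.mkLinearMap p.primeCompl M) x ∈
          (p.map (algebraMap A (Localization p.primeCompl))) •
            (⊤ : Submodule (Localization p.primeCompl)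
              (LocalizedModule p.primeCompl M))) :
    ∃ n : ℕ, 1 ≤ n ∧ f ^ n = 0 :=
  nilpotent_of_image_in_prime_localizations_general A M f h
end

section
/- Let L be an algebraically closed field, V a finite-dimensional L-vector space of dimension n ≥ 1, and φ, ψ ∈ GL(V) linear automorphisms satisfying ψ ∘ φ ∘ ψ⁻¹ = φ^q for some integer q ≥ 2. Then every eigenvalue λ of φ satisfies λ^{q^m} = λ for some integer m with 1 ≤ m ≤ n; in particular every eigenvalue of φ is a root of unity. -/
/-!
Conjugation preserves the spectrum, and by the spectral mapping theorem the spectrum of `φ ^ q`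
is the image of that of `φ` under `x ↦ x ^ q`. So this map sends the finite spectrum of `φ`
onto itself, hence permutes it, and every eigenvalue lies on a cycle of length at most
`#σ(φ) ≤ n`. An eigenvalue `λ` is nonzero because `φ` is invertible, so `λ ^ (q ^ m) = λ`
yields `λ ^ (q ^ m - 1) = 1`, and `q ^ m - 1 ≥ 1` since `q ≥ 2`.
-/

open Function Set

theorem Set.Finite.exists_isPeriodicPt_of_image_eq {α : Type*} {f : α → α} {S : Set α}
    (hS : S.Finite) (hf : f '' S = S) {x : α} (hx : x ∈ S) :
    ∃ m, 0 < m ∧ m ≤ S.ncard ∧ IsPeriodicPt f m x := by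
  have hmaps : MapsTo f S S := mapsTo_iff_image_subset.mpr hf.subset
  have hinj : Injective (hmaps.restrict f S S) :=
    hmaps.restrict_inj.mpr ((hS.surjOn_iff_bijOn_of_mapsTo hmaps).mp hf.symm.subset).injOn
  have : Fintype S := hS.fintype
  let x' : S := ⟨x, hx⟩
  refine ⟨minimalPeriod (hmaps.restrict f S S) x',
    minimalPeriod_pos_of_mem_periodicPts (hinj.mem_periodicPts x'), ?_, ?_⟩
  · simpa [Nat.card_eq_fintype_card] using
      minimalPeriod_le_card (f := hmaps.restrict f S S) (x := x')
  · exact (isPeriodicPt_minimalPeriod _ x').map (g := Subtype.val) fun _ ↦ rfl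

theorem spectrum.image_pow_eq_of_conj_eq_pow {𝕜 A : Type*} [Field 𝕜] [IsAlgClosed 𝕜]
    [Ring A] [Algebra 𝕜 A] {a : A} {u : Aˣ} {q : ℕ} (hq : 0 < q) (h : u * a * ↑u⁻¹ = a ^ q) :
    (· ^ q) '' spectrum 𝕜 a = spectrum 𝕜 a := by
  rw [← spectrum.map_pow_of_pos a hq, ← h, spectrum.units_conjugate]

theorem Module.End.ncard_spectrum_le_finrank {K V : Type*} [Field K] [AddCommGroup V]
    [Module K V] [FiniteDimensional K V] (f : Module.End K V) :
    (spectrum K f).ncard ≤ Module.finrank K V := by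
  classical
  have hroots : spectrum K f = (f.charpoly.roots.toFinset : Set K) := by
    ext μ
    simp [mem_spectrum_iff_isRoot_charpoly, f.charpoly_monic.ne_zero]
  rw [hroots, ncard_coe_finset]
  calc f.charpoly.roots.toFinset.card ≤ f.charpoly.roots.card := Multiset.toFinset_card_le _
    _ ≤ f.charpoly.natDegree := Polynomial.card_roots' _
    _ = Module.finrank K V := f.charpoly_natDegree

theorem eigenvalues_are_roots_of_unity_of_conj_pow_general
    (L : Type*) [Field L] [IsAlgClosed L]
    (V : Type*) [AddCommGroup V] [Module L V] [FiniteDimensional L V]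
    (n : ℕ) (hn : Module.finrank L V = n)
    (φ ψ : V ≃ₗ[L] V) (q : ℕ) (hq : 2 ≤ q)
    (hconj : ψ * φ * ψ⁻¹ = φ ^ q)
    (lam : L) (hlam : Module.End.HasEigenvalue (φ : V →ₗ[L] V) lam) :
    (∃ m : ℕ, 1 ≤ m ∧ m ≤ n ∧ lam ^ (q ^ m) = lam) ∧
      (∃ k : ℕ, 1 ≤ k ∧ lam ^ k = 1) := by
  let e := (LinearMap.GeneralLinearGroup.generalLinearEquiv L V).symm
  have hconj_units : (e ψ : Module.End L V) * φ * ↑(e ψ)⁻¹ = (φ : Module.End L V) ^ q := by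
    have h := congrArg (fun g ↦ ((e g : _ˣ) : Module.End L V)) hconj
    simp only [map_mul, map_pow, Units.val_mul, Units.val_pow_eq_pow_val] at h
    exact h
  have hspec := spectrum.image_pow_eq_of_conj_eq_pow (𝕜 := L) (by omega) hconj_units
  obtain ⟨m, hm, hmS, hper⟩ :=
    (Module.End.finite_spectrum _).exists_isPeriodicPt_of_image_eq hspec hlam.mem_spectrum
  have hfix : lam ^ q ^ m = lam := by simpa [IsPeriodicPt, IsFixedPt, pow_iterate] using hper
  have hlam0 : lam ≠ 0 := fun h ↦ (e φ).zero_notMem_spectrum L (h ▸ hlam.mem_spectrum)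
  have hqm : 1 < q ^ m := Nat.one_lt_pow hm.ne' (by omega)
  refine ⟨⟨m, hm, hn ▸ hmS.trans (Module.End.ncard_spectrum_le_finrank _), hfix⟩,
    q ^ m - 1, by omega, ?_⟩
  rw [pow_sub₀ _ hlam0 hqm.le, hfix, pow_one, mul_inv_cancel₀ hlam0]

/-- If `V` is an `n`-dimensional vector space (`n ≥ 1`) over an algebraically closed
field `L`, and `φ, ψ` are automorphisms of `V` with `ψ ∘ φ ∘ ψ⁻¹ = φ^q` for some
integer `q ≥ 2`, then every eigenvalue `λ` of `φ` satisfies `λ^(q^m) = λ` for some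
`1 ≤ m ≤ n`; in particular every eigenvalue of `φ` is a root of unity. -/
theorem eigenvalues_are_roots_of_unity_of_conj_pow
    (L : Type*) [Field L] [IsAlgClosed L]
    (V : Type*) [AddCommGroup V] [Module L V] [FiniteDimensional L V]
    (n : ℕ) (hn : Module.finrank L V = n) (hn1 : 1 ≤ n)
    (φ ψ : V ≃ₗ[L] V) (q : ℕ) (hq : 2 ≤ q)
    (hconj : ψ * φ * ψ⁻¹ = φ ^ q)
    (lam : L) (hlam : Module.End.HasEigenvalue (φ : V →ₗ[L] V) lam) :
    (∃ m : ℕ, 1 ≤ m ∧ m ≤ n ∧ lam ^ (q ^ m) = lam) ∧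
      (∃ k : ℕ, 1 ≤ k ∧ lam ^ k = 1) :=
  eigenvalues_are_roots_of_unity_of_conj_pow_general L V n hn φ ψ q hq hconj lam hlam
end

section
/- Let L be a field, q ≥ 2 an integer, and d(x) ∈ L[x] a monic polynomial with d(0) ≠ 0 such that d(x) divides d(x^q) in L[x]. Then there exist positive integers N and N' such that d(x) divides (x^N − 1)^{N'} in L[x]. Moreover one can take N' = deg d. -/
/-!
Over an algebraic closure, `d ∣ d(x^q)` makes the finite set of roots of `d` stable under
`λ ↦ λ^q`. The orbit `λ, λ^q, λ^(q^2), …` of a root therefore repeats, `λ^(q^i) = λ^(q^j)`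
with `i < j`, and as `λ ≠ 0` this gives `λ^(q^j - q^i) = 1`. If `N` is a common multiple of
the orders of the roots, each linear factor `x - λ` of `d` divides `x^N - 1`, so the product
of the `deg d` linear factors divides `(x^N - 1)^(deg d)`.
-/

open Polynomial

theorem isOfFinOrder_of_forall_pow_mem {M : Type*} [MonoidWithZero M]
    [IsLeftCancelMulZero M] {s : Finset M}
    (hs0 : (0 : M) ∉ s) {q : ℕ} (hq : 1 < q) (hpow : ∀ y ∈ s, y ^ q ∈ s) {x : M}
    (hx : x ∈ s) : IsOfFinOrder x := by
  have hiter : ∀ k : ℕ, x ^ q ^ k ∈ s := by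
    intro k
    induction k with
    | zero => simpa using hx
    | succ k ih => simpa only [pow_succ, pow_mul] using hpow _ ih
  obtain ⟨i, j, hij, heq⟩ := s.finite_toSet.exists_lt_map_eq_of_forall_mem hiter
  have hqij : q ^ i < q ^ j := Nat.pow_lt_pow_right hq hij
  refine isOfFinOrder_iff_pow_eq_one.2 ⟨q ^ j - q ^ i, Nat.sub_pos_of_lt hqij, ?_⟩
  apply mul_left_cancel₀ (pow_ne_zero (q ^ i) (ne_of_mem_of_not_mem hx hs0))
  rw [← pow_add, Nat.add_sub_cancel' hqij.le, mul_one, heq]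

theorem exists_pow_eq_one_of_forall_isOfFinOrder {M : Type*} [Monoid M] (s : Finset M)
    (h : ∀ x ∈ s, IsOfFinOrder x) : ∃ N : ℕ, 0 < N ∧ ∀ x ∈ s, x ^ N = 1 :=
  ⟨∏ x ∈ s, orderOf x, Finset.prod_pos fun x hx => (h x hx).orderOf_pos,
    fun _ hx => orderOf_dvd_iff_pow_eq_one.1 (Finset.dvd_prod_of_mem _ hx)⟩

namespace Polynomial

theorem IsRoot.eval_of_dvd_comp {R : Type*} [CommSemiring R] {p r : R[X]} (h : p ∣ p.comp r)
    {a : R} (ha : p.IsRoot a) : p.IsRoot (r.eval a) := by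
  obtain ⟨c, hc⟩ := h
  have := congrArg (eval a) hc
  rwa [eval_comp, eval_mul, ha.eq_zero, zero_mul] at this

theorem Splits.dvd_pow_natDegree_of_forall_isRoot {K : Type*} [Field K] {f g : K[X]}
    (hf : f.Splits) (hf0 : f ≠ 0) (h : ∀ a ∈ f.roots, g.IsRoot a) :
    f ∣ g ^ f.natDegree := by
  conv_lhs => rw [hf.eq_prod_roots]
  rw [C_mul_dvd (leadingCoeff_ne_zero.2 hf0), hf.natDegree_eq_card_roots,
    ← Multiset.prod_replicate, ← Multiset.map_const']
  exact Multiset.prod_dvd_prod_of_dvd _ _ fun a ha => dvd_iff_isRoot.2 (h a ha)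

end Polynomial

theorem monic_dvd_pow_sub_one_pow_of_dvd_comp_general
    (L : Type*) [Field L] (q : ℕ) (hq : 2 ≤ q)
    (d : L[X]) (h0 : d.eval 0 ≠ 0)
    (hdvd : d ∣ d.comp (X ^ q)) :
    (∃ N N' : ℕ, 0 < N ∧ 0 < N' ∧ d ∣ (X ^ N - 1) ^ N') ∧
      (∃ N : ℕ, 0 < N ∧ d ∣ (X ^ N - 1) ^ d.natDegree) := by
  classical
  set f := algebraMap L (AlgebraicClosure L)
  set dK := d.map f
  have hdK0 : dK ≠ 0 := (Polynomial.map_ne_zero_iff f.injective).2 (by rintro rfl; simp at h0)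
  have hroots0 : (0 : AlgebraicClosure L) ∉ dK.roots.toFinset := by
    simpa [dK, hdK0, eval_map_algebraMap] using h0
  have hrootsPow : ∀ y ∈ dK.roots.toFinset, y ^ q ∈ dK.roots.toFinset := by
    have hcompK : dK ∣ dK.comp (X ^ q) := by simpa [dK, map_comp] using map_dvd f hdvd
    intro y hy
    simpa [hdK0] using ((mem_roots hdK0).1 (Multiset.mem_toFinset.1 hy)).eval_of_dvd_comp hcompK
  obtain ⟨N, hN, hpowN⟩ := exists_pow_eq_one_of_forall_isOfFinOrder dK.roots.toFinset
    fun _ => isOfFinOrder_of_forall_pow_mem hroots0 hq hrootsPow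
  have hdvdK : dK ∣ (X ^ N - 1) ^ dK.natDegree :=
    (IsAlgClosed.splits dK).dvd_pow_natDegree_of_forall_isRoot hdK0
      fun a ha => by simp [hpowN a (Multiset.mem_toFinset.2 ha)]
  have hdvdN : d ∣ (X ^ N - 1) ^ d.natDegree := by
    rw [← map_dvd_map' f]
    simpa [dK] using hdvdK
  exact ⟨⟨N, d.natDegree + 1, hN, d.natDegree.succ_pos, hdvdN.trans (pow_dvd_pow _ le_self_add)⟩,
    N, hN, hdvdN⟩

/-- If `d ∈ L[x]` is monic with `d(0) ≠ 0` and `d(x) ∣ d(x^q)` for some `q ≥ 2`, then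
`d(x) ∣ (x^N − 1)^N'` for some positive integers `N, N'`; moreover one can take
`N' = deg d`. -/
theorem monic_dvd_pow_sub_one_pow_of_dvd_comp
    (L : Type*) [Field L] (q : ℕ) (hq : 2 ≤ q)
    (d : L[X]) (hmonic : d.Monic) (h0 : d.eval 0 ≠ 0)
    (hdvd : d ∣ d.comp (X ^ q)) :
    (∃ N N' : ℕ, 0 < N ∧ 0 < N' ∧ d ∣ (X ^ N - 1) ^ N') ∧
      (∃ N : ℕ, 0 < N ∧ d ∣ (X ^ N - 1) ^ d.natDegree) :=
  monic_dvd_pow_sub_one_pow_of_dvd_comp_general L q hq d h0 hdvd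
end

section
/- Let A be a complete Noetherian local ring with maximal ideal m, and let h(x) = x^n + b_{n−1}x^{n−1} + ⋯ + b_0 ∈ A[x] be a monic polynomial of degree n ≥ 1 all of whose non-leading coefficients b_i lie in m. Then the quotient A⟦x⟧/(h(x)) of the power series ring is a free A-module of rank n, with basis given by the images of 1, x, …, x^{n−1}. -/
/-!
Over an `I`-adically complete ring, Weierstrass division by a distinguished polynomial `g`
shows that every power series is congruent modulo `g` to a unique polynomial of degree
`< deg g`, i.e. `A[X] ⧸ (g) ≃ A⟦X⟧ ⧸ (g)`. Since `g` is monic, `A[X] ⧸ (g)` has the power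
basis `1, X, …, X^(deg g - 1)`, and the isomorphism carries it to the images of the same
monomials in `A⟦X⟧ ⧸ (g)`.
-/

open PowerSeries

namespace Polynomial.IsDistinguishedAt

variable {A : Type*} [CommRing A] {g : Polynomial A} {I : Ideal A}

noncomputable def powerBasisPowerSeriesQuotient (H : g.IsDistinguishedAt I) [IsAdicComplete I A] :
    PowerBasis A (A⟦X⟧ ⧸ Ideal.span {(g : A⟦X⟧)}) :=
  (AdjoinRoot.powerBasis' H.monic).map H.algEquivQuotient

theorem powerBasisPowerSeriesQuotient_gen (H : g.IsDistinguishedAt I) [IsAdicComplete I A] :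
    H.powerBasisPowerSeriesQuotient.gen = Ideal.Quotient.mk _ PowerSeries.X := by
  -- `PowerBasis.map_gen` does not rewrite: the instances on `AdjoinRoot g` and on
  -- `A[X] ⧸ Ideal.span {g}` agree only after unfolding.
  change H.algEquivQuotient (Ideal.Quotient.mk _ Polynomial.X) = _
  simp

theorem coe_powerBasisPowerSeriesQuotient_basis (H : g.IsDistinguishedAt I)
    [IsAdicComplete I A] :
    ⇑H.powerBasisPowerSeriesQuotient.basis =
      fun i : Fin g.natDegree => Ideal.Quotient.mk _ ((PowerSeries.X : A⟦X⟧) ^ (i : ℕ)) := by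
  funext i
  rw [PowerBasis.basis_eq_pow, powerBasisPowerSeriesQuotient_gen, map_pow]

end Polynomial.IsDistinguishedAt

theorem quotient_powerSeries_by_distinguished_poly_basis_general
    (A : Type*) [CommRing A] [IsLocalRing A]
    [IsAdicComplete (IsLocalRing.maximalIdeal A) A]
    (n : ℕ)
    (h : Polynomial A) (hmonic : h.Monic) (hdeg : h.natDegree = n)
    (hcoeff : ∀ i < n, h.coeff i ∈ IsLocalRing.maximalIdeal A) :
    LinearIndependent A
        (fun i : Fin n =>
          Ideal.Quotient.mk (Ideal.span {(h : PowerSeries A)})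
            ((PowerSeries.X : PowerSeries A) ^ (i : ℕ))) ∧
      Submodule.span A
          (Set.range fun i : Fin n =>
            Ideal.Quotient.mk (Ideal.span {(h : PowerSeries A)})
              ((PowerSeries.X : PowerSeries A) ^ (i : ℕ))) = ⊤ := by
  subst hdeg
  have H : h.IsDistinguishedAt (IsLocalRing.maximalIdeal A) := ⟨⟨hcoeff _⟩, hmonic⟩
  rw [← H.coe_powerBasisPowerSeriesQuotient_basis]
  exact ⟨Module.Basis.linearIndependent _, Module.Basis.span_eq _⟩

/-- Weierstrass division consequence: if `A` is a complete Noetherian local ring and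
`h ∈ A[x]` is a monic polynomial of degree `n ≥ 1` all of whose non-leading
coefficients lie in the maximal ideal, then `A⟦x⟧/(h)` is a free `A`-module of rank
`n` with basis the images of `1, x, …, x^(n−1)`. -/
theorem quotient_powerSeries_by_distinguished_poly_basis
    (A : Type*) [CommRing A] [IsNoetherianRing A] [IsLocalRing A]
    [IsAdicComplete (IsLocalRing.maximalIdeal A) A]
    (n : ℕ) (hn : 1 ≤ n)
    (h : Polynomial A) (hmonic : h.Monic) (hdeg : h.natDegree = n)
    (hcoeff : ∀ i < n, h.coeff i ∈ IsLocalRing.maximalIdeal A) :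
    LinearIndependent A
        (fun i : Fin n =>
          Ideal.Quotient.mk (Ideal.span {(h : PowerSeries A)})
            ((PowerSeries.X : PowerSeries A) ^ (i : ℕ))) ∧
      Submodule.span A
          (Set.range fun i : Fin n =>
            Ideal.Quotient.mk (Ideal.span {(h : PowerSeries A)})
              ((PowerSeries.X : PowerSeries A) ^ (i : ℕ))) = ⊤ :=
  quotient_powerSeries_by_distinguished_poly_basis_general A n h hmonic hdeg hcoeff
end

section
/- Let A be a commutative local ring with maximal ideal m and let s₂ ∈ A^×. Suppose K is an A-submodule of A² containing (−s₂, 1) and (1 − s₂², 0), and suppose K is generated by at most two elements as an A-module. Then there exists λ ∈ A dividing 1 − s₂² such that K is generated as an A-module by (−s₂, 1) and (λ, 0), and A²/K ≅ A/(λ). -/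
/-- Let `A` be a commutative local ring, `s₂ ∈ A^×`, and `K ⊆ A²` a submodule
containing `(−s₂, 1)` and `(1 − s₂², 0)` that is generated by at most two elements.
Then there is `l ∈ A` dividing `1 − s₂²` such that `K` is generated by `(−s₂, 1)` and
`(l, 0)`, and `A²/K ≅ A/(l)` as `A`-modules. -/
theorem submodule_two_gen_structure
    (A : Type*) [CommRing A] [IsLocalRing A]
    (s₂ : A) (hs₂ : IsUnit s₂)
    (K : Submodule A (A × A))
    (h1 : ((-s₂, 1) : A × A) ∈ K)
    (h2 : ((1 - s₂ ^ 2, 0) : A × A) ∈ K)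
    (hgen : ∃ S : Finset (A × A), S.card ≤ 2 ∧ Submodule.span A (S : Set (A × A)) = K) :
    ∃ l : A, l ∣ 1 - s₂ ^ 2 ∧
      K = Submodule.span A {((-s₂, 1) : A × A), (l, 0)} ∧
      Nonempty (((A × A) ⧸ K) ≃ₗ[A] (A ⧸ Ideal.span {l})) := by
  classical
  -- Step 1: K is a span of exactly two (not nec. distinct) elements
  obtain ⟨S, hcard, hspan⟩ := hgen
  have hpair : ∃ g₁ g₂ : A × A, K = Submodule.span A {g₁, g₂} := by
    have hc : S.card = 0 ∨ S.card = 1 ∨ S.card = 2 := by omega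
    rcases hc with h | h | h
    · rw [Finset.card_eq_zero] at h
      subst h
      exact ⟨0, 0, by rw [← hspan]; simp⟩
    · obtain ⟨a, rfl⟩ := Finset.card_eq_one.mp h
      exact ⟨a, a, by rw [← hspan]; simp⟩
    · obtain ⟨a, b, hab, rfl⟩ := Finset.card_eq_two.mp h
      exact ⟨a, b, by rw [← hspan]; simp⟩
  obtain ⟨g₁, g₂, hK⟩ := hpair
  -- Step 2: one of the second coordinates is a unit
  have hv : ((-s₂, 1) : A × A) ∈ Submodule.span A {g₁, g₂} := hK ▸ h1
  obtain ⟨a, b, hab⟩ := Submodule.mem_span_pair.mp hv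
  have h2nd : a * g₁.2 + b * g₂.2 = 1 := by
    have := congrArg Prod.snd hab
    simpa using this
  have hunit : IsUnit g₁.2 ∨ IsUnit g₂.2 := by
    have := IsLocalRing.isUnit_or_isUnit_of_isUnit_add (a := a * g₁.2) (b := b * g₂.2)
      (by rw [h2nd]; exact isUnit_one)
    rcases this with h | h
    · exact Or.inl (isUnit_of_mul_isUnit_right h)
    · exact Or.inr (isUnit_of_mul_isUnit_right h)
  -- Main step as a general claim
  have main : ∀ p q : A × A, K = Submodule.span A {p, q} → IsUnit q.2 →
      ∃ c : A, K = Submodule.span A {((-s₂, 1) : A × A), (c, 0)} := by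
    intro p q hKpq hu
    obtain ⟨u, hu'⟩ := hu
    set r : A := (↑u⁻¹ : A) with hr
    have hur : q.2 * r = 1 := by
      rw [← hu', hr]; exact u.mul_inv
    set c : A := p.1 - p.2 * r * q.1 with hc
    have hpmem : p ∈ K := hKpq ▸ Submodule.subset_span (by simp)
    have hqmem : q ∈ K := hKpq ▸ Submodule.subset_span (by simp)
    have hc0 : ((c, 0) : A × A) = p - (p.2 * r) • q := by
      apply Prod.ext <;> simp [hc]
      · linear_combination p.2 * hur
    have hcK : ((c, 0) : A × A) ∈ K := by
      rw [hc0]; exact K.sub_mem hpmem (K.smul_mem _ hqmem)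
    refine ⟨c, le_antisymm ?_ ?_⟩
    · -- K ≤ span {v, (c,0)}
      rw [hKpq, Submodule.span_le]
      -- enough: p, q ∈ span {v, (c,0)}
      have hvv : ((-s₂, 1) : A × A) ∈ Submodule.span A {((-s₂, 1) : A × A), ((c, 0) : A × A)} :=
        Submodule.subset_span (by simp)
      have hcc : ((c, 0) : A × A) ∈ Submodule.span A {((-s₂, 1) : A × A), ((c, 0) : A × A)} :=
        Submodule.subset_span (by simp)
      -- v = a' • p + b' • q with a' * p.2 + b' * q.2 = 1
      obtain ⟨a', b', hab'⟩ := Submodule.mem_span_pair.mp (hKpq ▸ h1)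
      have h2' : a' * p.2 + b' * q.2 = 1 := by
        have := congrArg Prod.snd hab'
        simpa using this
      -- q = t⁻¹ • (v - a' • (c,0)) where t = a' * p.2 * r + b'
      set t : A := a' * p.2 * r + b' with ht
      have htq : t * q.2 = 1 := by
        have : a' * p.2 * (r * q.2) + b' * q.2 = 1 := by
          rw [mul_comm r q.2, hur, mul_one]; exact h2'
        rw [ht]; ring_nf; ring_nf at this; linear_combination this
      have hveq : ((-s₂, 1) : A × A) = a' • ((c, 0) : A × A) + t • q := by
        rw [hc0, ht]
        rw [← hab']
        apply Prod.ext <;> simp <;> ring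
      have hq : q ∈ Submodule.span A {((-s₂, 1) : A × A), ((c, 0) : A × A)} := by
        have : t • q = ((-s₂, 1) : A × A) - a' • ((c, 0) : A × A) := by
          rw [hveq]; abel
        have hmem : t • q ∈ Submodule.span A {((-s₂, 1) : A × A), ((c, 0) : A × A)} := by
          rw [this]; exact Submodule.sub_mem _ hvv (Submodule.smul_mem _ _ hcc)
        have htu : IsUnit t := IsUnit.of_mul_eq_one _ htq
        obtain ⟨w, hw⟩ := htu
        have : q = (↑w⁻¹ : A) • (t • q) := by
          rw [smul_smul, ← hw, w.inv_mul, one_smul]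
        rw [this]
        exact Submodule.smul_mem _ _ hmem
      have hp : p ∈ Submodule.span A {((-s₂, 1) : A × A), ((c, 0) : A × A)} := by
        have : p = ((c, 0) : A × A) + (p.2 * r) • q := by rw [hc0]; abel
        rw [this]
        exact Submodule.add_mem _ hcc (Submodule.smul_mem _ _ hq)
      intro x hx
      simp only [Set.mem_insert_iff, Set.mem_singleton_iff] at hx
      rcases hx with rfl | rfl
      · exact hp
      · exact hq
    · -- span {v, (c,0)} ≤ K
      rw [Submodule.span_le]
      intro x hx
      simp only [Set.mem_insert_iff, Set.mem_singleton_iff] at hx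
      rcases hx with rfl | rfl
      · exact h1
      · exact hcK
  -- apply main
  have hKc : ∃ c : A, K = Submodule.span A {((-s₂, 1) : A × A), (c, 0)} := by
    rcases hunit with h | h
    · exact main g₂ g₁ (by rw [hK, Set.pair_comm]) h
    · exact main g₁ g₂ hK h
  obtain ⟨c, hKc⟩ := hKc
  -- c divides 1 - s₂²
  have hwmem : ((1 - s₂ ^ 2, 0) : A × A) ∈ Submodule.span A {((-s₂, 1) : A × A), ((c, 0) : A × A)} :=
    hKc ▸ h2
  obtain ⟨p, q, hpq⟩ := Submodule.mem_span_pair.mp hwmem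
  have hp0 : p = 0 := by
    have := congrArg Prod.snd hpq
    simpa using this
  have hdvd : c ∣ 1 - s₂ ^ 2 := by
    refine ⟨q, ?_⟩
    have := congrArg Prod.fst hpq
    subst hp0
    simp at this
    rw [← this]; ring
  -- the quotient isomorphism
  set g : (A × A) →ₗ[A] A := LinearMap.fst A A A + s₂ • LinearMap.snd A A A with hg
  have hgapp : ∀ x : A × A, g x = x.1 + s₂ * x.2 := by
    intro x; simp [hg]
  set f : (A × A) →ₗ[A] A ⧸ Ideal.span {c} :=
    (Ideal.span {c} : Submodule A A).mkQ.comp g with hf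
  have hfsurj : Function.Surjective f := by
    intro y
    obtain ⟨x, rfl⟩ := Submodule.Quotient.mk_surjective _ y
    exact ⟨(x, 0), by simp [hf, hgapp]⟩
  have hker : LinearMap.ker f = K := by
    apply le_antisymm
    · intro x hx
      have : g x ∈ Ideal.span {c} := by
        have hx0 : f x = 0 := hx
        rwa [hf, LinearMap.comp_apply, Submodule.mkQ_apply,
          Submodule.Quotient.mk_eq_zero] at hx0
      obtain ⟨t, ht⟩ := Ideal.mem_span_singleton'.mp this
      rw [hgapp] at ht
      rw [hKc]
      apply Submodule.mem_span_pair.mpr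
      refine ⟨x.2, t, ?_⟩
      apply Prod.ext <;> simp
      linear_combination ht
    · rw [hKc, Submodule.span_le]
      intro x hx
      simp only [Set.mem_insert_iff, Set.mem_singleton_iff] at hx
      rcases hx with rfl | rfl
      · show f _ = 0
        simp [hf, hgapp, Submodule.Quotient.mk_eq_zero]
      · show f _ = 0
        rw [hf]
        simp only [LinearMap.comp_apply, hgapp]
        rw [Submodule.mkQ_apply, Submodule.Quotient.mk_eq_zero]
        simpa using Ideal.mem_span_singleton_self c
  refine ⟨c, hdvd, hKc, ⟨?_⟩⟩
  have e := f.quotKerEquivOfSurjective hfsurj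
  rw [hker] at e
  exact e
end
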